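/- arXiv:1606.03761 — 5 statements merged into one kernel-verified Lean document; each statement's English description precedes it below -/
import Mathlib

section
/- For any circular binary word W of length n ≥ 4, the difference |W|_{1101} − |W|_{1011} equals the difference |W|_{1010} − |W|_{0101} (as integers). -/
/-- Number of cyclic occurrences of the word `U` (of length `k`) in the circular
binary word `W` of length `n`. -/
def occ (n k : ℕ) [NeZero n] (W : ZMod n → Fin 2) (U : Fin k → Fin 2) : ℕ :=
  (Finset.univ.filter (fun i : ZMod n => ∀ j : Fin k, W (i + (j.val : ZMod n)) = U j)).card

/-! On a circular word every occurrence of `101` extends uniquely one letter to the left and one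
letter to the right, so `|0101| + |1101| = |101| = |1010| + |1011|`; rearranging gives the identity.
Circularity is what makes the left and right extensions exhaust the occurrences of `101`. -/

open Finset

section
variable {n : ℕ} [NeZero n] (W : ZMod n → Fin 2)

theorem sum_occ_snoc {k : ℕ} (U : Fin k → Fin 2) :
    ∑ a, occ n (k + 1) W (Fin.snoc U a) = occ n k W U := by
  unfold occ
  rw [card_eq_sum_card_fiberwise (f := fun i => W (i + (k : ℕ))) (t := univ) (by simp)]
  refine sum_congr rfl fun a _ => ?_
  rw [filter_filter]
  refine congrArg card (filter_congr fun i _ => ?_)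
  simp [Fin.forall_fin_succ', Fin.snoc_castSucc, Fin.snoc_last, and_comm]

theorem card_filter_add_one_eq_occ {k : ℕ} (U : Fin k → Fin 2) :
    #{i : ZMod n | ∀ j : Fin k, W (i + 1 + (j.val : ZMod n)) = U j} = occ n k W U :=
  card_equiv (Equiv.addRight 1) fun i => by simp

theorem sum_occ_cons {k : ℕ} (U : Fin k → Fin 2) :
    ∑ a, occ n (k + 1) W (Fin.cons a U) = occ n k W U := by
  rw [← card_filter_add_one_eq_occ]
  unfold occ
  rw [card_eq_sum_card_fiberwise (f := W) (t := univ) (by simp)]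
  refine sum_congr rfl fun a _ => ?_
  rw [filter_filter]
  refine congrArg card (filter_congr fun i _ => ?_)
  simp [Fin.forall_fin_succ, add_assoc, add_comm (1 : ZMod n), eq_comm, and_comm]

end

theorem stmt_5_general (n : ℕ) [NeZero n] (W : ZMod n → Fin 2) :
    (occ n 4 W ![1,1,0,1] : ℤ) - occ n 4 W ![1,0,1,1]
      = (occ n 4 W ![1,0,1,0] : ℤ) - occ n 4 W ![0,1,0,1] := by
  have hcons : occ n 4 W ![0, 1, 0, 1] + occ n 4 W ![1, 1, 0, 1] = occ n 3 W ![1, 0, 1] := by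
    rw [← sum_occ_cons W ![1, 0, 1], Fin.sum_univ_two]
    rfl
  have hsnoc : occ n 4 W ![1, 0, 1, 0] + occ n 4 W ![1, 0, 1, 1] = occ n 3 W ![1, 0, 1] := by
    have h₀ : (Fin.snoc ![1, 0, 1] 0 : Fin 4 → Fin 2) = ![1, 0, 1, 0] := by decide
    have h₁ : (Fin.snoc ![1, 0, 1] 1 : Fin 4 → Fin 2) = ![1, 0, 1, 1] := by decide
    rw [← sum_occ_snoc W ![1, 0, 1], Fin.sum_univ_two, h₀, h₁]
  omega

theorem stmt_5 (n : ℕ) [NeZero n] (hn : 4 ≤ n) (W : ZMod n → Fin 2) :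
    (occ n 4 W ![1,1,0,1] : ℤ) - occ n 4 W ![1,0,1,1]
      = (occ n 4 W ![1,0,1,0] : ℤ) - occ n 4 W ![0,1,0,1] :=
  stmt_5_general n W
end

section
/- For any circular binary word W of length n ≥ 4, the difference |W|_{1010} − |W|_{0101} equals the difference |W|_{0100} − |W|_{0010} (as integers). -/
open Finset in
lemma occ4_eq (n : ℕ) [NeZero n] (W : ZMod n → Fin 2) (a b c d : Fin 2) :
    occ n 4 W ![a,b,c,d] =
      (univ.filter (fun i : ZMod n =>
        W i = a ∧ W (i+1) = b ∧ W (i+2) = c ∧ W (i+3) = d)).card := by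
  unfold occ
  congr 1
  ext i
  simp [Fin.forall_fin_succ, add_assoc]
  norm_num

open Finset in
lemma split_first (n : ℕ) [NeZero n] (W : ZMod n → Fin 2) (P : ZMod n → Prop)
    [DecidablePred P] (f : ZMod n → ZMod n) :
    (univ.filter (fun i : ZMod n => W (f i) = 0 ∧ P i)).card
      + (univ.filter (fun i : ZMod n => W (f i) = 1 ∧ P i)).card
      = (univ.filter P).card := by
  rw [← Finset.card_union_of_disjoint]
  · congr 1
    ext i
    have h2 : W (f i) = 0 ∨ W (f i) = 1 := by omega
    simp only [Finset.mem_union, Finset.mem_filter, Finset.mem_univ, true_and]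
    tauto
  · rw [Finset.disjoint_left]
    intro i hi hi'
    simp only [Finset.mem_filter] at hi hi'
    omega

open Finset in
theorem stmt_6 (n : ℕ) [NeZero n] (hn : 4 ≤ n) (W : ZMod n → Fin 2) :
    (occ n 4 W ![1,0,1,0] : ℤ) - occ n 4 W ![0,1,0,1]
      = (occ n 4 W ![0,1,0,0] : ℤ) - occ n 4 W ![0,0,1,0] := by
  have key : occ n 4 W ![0,0,1,0] + occ n 4 W ![1,0,1,0]
      = occ n 4 W ![0,1,0,0] + occ n 4 W ![0,1,0,1] := by
    rw [occ4_eq, occ4_eq, occ4_eq, occ4_eq]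
    have h1 := split_first n W (fun i => W (i+1) = 0 ∧ W (i+2) = 1 ∧ W (i+3) = 0) id
    have h2 := split_first n W (fun i => W i = 0 ∧ W (i+1) = 1 ∧ W (i+2) = 0)
      (fun i => i + 3)
    simp only [id] at h1
    have hcong : (univ.filter (fun i : ZMod n =>
          W (i+1) = 0 ∧ W (i+2) = 1 ∧ W (i+3) = 0)).card
        = (univ.filter (fun i : ZMod n =>
          W i = 0 ∧ W (i+1) = 1 ∧ W (i+2) = 0)).card := by
      apply Finset.card_nbij' (fun i => i + 1) (fun i => i - 1)
      · intro i hi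
        simp only [Finset.mem_coe, Finset.mem_filter, Finset.mem_univ, true_and] at hi ⊢
        refine ⟨hi.1, ?_, ?_⟩
        · have : i + 1 + 1 = i + 2 := by ring
          rw [this]; exact hi.2.1
        · have : i + 1 + 2 = i + 3 := by ring
          rw [this]; exact hi.2.2
      · intro i hi
        simp only [Finset.mem_coe, Finset.mem_filter, Finset.mem_univ, true_and] at hi ⊢
        refine ⟨?_, ?_, ?_⟩
        · have : i - 1 + 1 = i := by ring
          rw [this]; exact hi.1
        · have : i - 1 + 2 = i + 1 := by ring
          rw [this]; exact hi.2.1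
        · have : i - 1 + 3 = i + 2 := by ring
          rw [this]; exact hi.2.2
      · intro i _; ring
      · intro i _; ring
    have key2 := h1.trans (hcong.trans h2.symm)
    -- rearrange the filter predicates to match goal shapes
    have e1 : (univ.filter (fun i : ZMod n =>
          W i = 0 ∧ W (i+1) = 0 ∧ W (i+2) = 1 ∧ W (i+3) = 0)).card
        = (univ.filter (fun i : ZMod n =>
          W i = 0 ∧ (W (i+1) = 0 ∧ W (i+2) = 1 ∧ W (i+3) = 0))).card := by rfl
    have e2 : (univ.filter (fun i : ZMod n =>
          W i = 1 ∧ W (i+1) = 0 ∧ W (i+2) = 1 ∧ W (i+3) = 0)).card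
        = (univ.filter (fun i : ZMod n =>
          W i = 1 ∧ (W (i+1) = 0 ∧ W (i+2) = 1 ∧ W (i+3) = 0))).card := by rfl
    have e3 : (univ.filter (fun i : ZMod n =>
          W i = 0 ∧ W (i+1) = 1 ∧ W (i+2) = 0 ∧ W (i+3) = 0)).card
        = (univ.filter (fun i : ZMod n =>
          W (i+3) = 0 ∧ (W i = 0 ∧ W (i+1) = 1 ∧ W (i+2) = 0))).card := by
      congr 1; ext i; simp; tauto
    have e4 : (univ.filter (fun i : ZMod n =>
          W i = 0 ∧ W (i+1) = 1 ∧ W (i+2) = 0 ∧ W (i+3) = 1)).card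
        = (univ.filter (fun i : ZMod n =>
          W (i+3) = 1 ∧ (W i = 0 ∧ W (i+1) = 1 ∧ W (i+2) = 0))).card := by
      congr 1; ext i; simp; tauto
    rw [e1, e2, e3, e4]
    omega
  push_cast
  omega
end

section
/- For any circular binary word W of length n ≥ 4, the difference |W|_{0011} − |W|_{1100} equals the difference |W|_{1010} − |W|_{0101} (as integers). -/
def majority (a b c : Fin 2) : ℤ := if 2 ≤ a.val + b.val + c.val then 1 else 0

theorem Fintype.sum_sub_comp_add_right_eq_zero {G M : Type*} [AddGroup G] [Fintype G]
    [AddCommGroup M] (f : G → M) (a : G) : ∑ i, (f (i + a) - f i) = 0 := by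
  rw [Finset.sum_sub_distrib, sub_eq_zero]
  exact Equiv.sum_comp (Equiv.addRight a) f

theorem occ_eq_sum_ite (n k : ℕ) [NeZero n] (W : ZMod n → Fin 2) (U : Fin k → Fin 2) :
    (occ n k W U : ℤ) = ∑ i, if (fun j : Fin k => W (i + j.val)) = U then 1 else 0 := by
  rw [occ, Finset.card_filter]
  push_cast
  simp only [funext_iff]

theorem pattern_indicators_eq_majority_sub (v : Fin 4 → Fin 2) :
    ((if v = ![0,0,1,1] then 1 else 0) - (if v = ![1,1,0,0] then 1 else 0)) -
      ((if v = ![1,0,1,0] then 1 else 0) - (if v = ![0,1,0,1] then 1 else 0))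
      = majority (v 1) (v 2) (v 3) - majority (v 0) (v 1) (v 2) := by
  revert v
  decide

theorem stmt_7_general (n : ℕ) [NeZero n] (W : ZMod n → Fin 2) :
    (occ n 4 W ![0,0,1,1] : ℤ) - occ n 4 W ![1,1,0,0]
      = (occ n 4 W ![1,0,1,0] : ℤ) - occ n 4 W ![0,1,0,1] := by
  let m : ZMod n → ℤ := fun i => majority (W i) (W (i + 1)) (W (i + 2))
  have window_identity (i : ZMod n) :=
    pattern_indicators_eq_majority_sub (fun j : Fin 4 => W (i + j.val))
  rw [← sub_eq_zero]
  simp only [occ_eq_sum_ite, ← Finset.sum_sub_distrib, window_identity]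
  convert Fintype.sum_sub_comp_add_right_eq_zero m 1 using 3 with i
  all_goals norm_num [m, add_assoc]

theorem stmt_7 (n : ℕ) [NeZero n] (hn : 4 ≤ n) (W : ZMod n → Fin 2) :
    (occ n 4 W ![0,0,1,1] : ℤ) - occ n 4 W ![1,1,0,0]
      = (occ n 4 W ![1,0,1,0] : ℤ) - occ n 4 W ![0,1,0,1] :=
  stmt_7_general n W
end

section
/- (Grandsart's property) For any circular binary word W of length n ≥ 4, the four integer differences |W|_{0011} − |W|_{1100}, |W|_{1101} − |W|_{1011}, |W|_{1010} − |W|_{0101}, and |W|_{0100} − |W|_{0010} are all equal. -/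
lemma occ4 (n : ℕ) [NeZero n] (W : ZMod n → Fin 2) (a b c d : Fin 2) :
    occ n 4 W ![a,b,c,d]
      = (Finset.univ.filter (fun i : ZMod n =>
          W i = a ∧ W (i+1) = b ∧ W (i+2) = c ∧ W (i+3) = d)).card := by
  unfold occ
  congr 1
  ext i
  simp only [Finset.mem_filter, Finset.mem_univ, true_and]
  constructor
  · intro h
    have h0 := h 0; have h1 := h 1; have h2 := h 2; have h3 := h 3
    refine ⟨?_, ?_, ?_, ?_⟩
    · simpa using h0
    · simpa using h1
    · simpa using h2
    · simpa using h3
  · rintro ⟨h0,h1,h2,h3⟩ j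
    fin_cases j <;> simp_all

lemma hsplit (n : ℕ) [NeZero n] (f : ZMod n → Fin 2) (p : ZMod n → Prop) [DecidablePred p] :
    (Finset.univ.filter (fun i : ZMod n => f i = 0 ∧ p i)).card
      + (Finset.univ.filter (fun i : ZMod n => f i = 1 ∧ p i)).card
      = (Finset.univ.filter p).card := by
  rw [← Finset.card_union_of_disjoint ?hd]
  case hd =>
    rw [Finset.disjoint_left]
    rintro i hi hj
    simp only [Finset.mem_filter, Finset.mem_univ, true_and] at hi hj
    exact absurd (hi.1.symm.trans hj.1) (by decide)
  congr 1
  ext i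
  simp only [Finset.mem_union, Finset.mem_filter, Finset.mem_univ, true_and]
  constructor
  · rintro (⟨_, h⟩ | ⟨_, h⟩) <;> exact h
  · intro h
    rcases (by decide : ∀ x : Fin 2, x = 0 ∨ x = 1) (f i) with h0 | h1
    exacts [Or.inl ⟨h0, h⟩, Or.inr ⟨h1, h⟩]

lemma key (n : ℕ) [NeZero n] (W : ZMod n → Fin 2) (b c d : Fin 2) :
    occ n 4 W ![0,b,c,d] + occ n 4 W ![1,b,c,d]
      = occ n 4 W ![b,c,d,0] + occ n 4 W ![b,c,d,1] := by
  rw [occ4, occ4, occ4, occ4]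
  have shift : ∀ a : Fin 2,
      (Finset.univ.filter (fun i : ZMod n =>
        W i = a ∧ W (i+1) = b ∧ W (i+2) = c ∧ W (i+3) = d)).card
      = (Finset.univ.filter (fun i : ZMod n =>
        W (i-1) = a ∧ (W i = b ∧ W (i+1) = c ∧ W (i+2) = d))).card := by
    intro a
    apply Finset.card_equiv (Equiv.addRight (1 : ZMod n))
    intro i
    simp only [Finset.mem_filter, Finset.mem_univ, true_and, Equiv.coe_addRight]
    have e1 : i + 1 - 1 = i := by ring
    have e2 : i + 1 + 1 = i + 2 := by ring
    have e3 : i + 1 + 2 = i + 3 := by ring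
    rw [e1, e2, e3]
  have reorder : ∀ e : Fin 2,
      (Finset.univ.filter (fun i : ZMod n =>
        W i = b ∧ W (i+1) = c ∧ W (i+2) = d ∧ W (i+3) = e)).card
      = (Finset.univ.filter (fun i : ZMod n =>
        W (i+3) = e ∧ (W i = b ∧ W (i+1) = c ∧ W (i+2) = d))).card := by
    intro e
    congr 1
    ext i
    simp only [Finset.mem_filter, Finset.mem_univ, true_and]
    tauto
  rw [shift 0, shift 1, reorder 0, reorder 1,
    hsplit n (fun i => W (i-1)) (fun i => W i = b ∧ W (i+1) = c ∧ W (i+2) = d),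
    hsplit n (fun i => W (i+3)) (fun i => W i = b ∧ W (i+1) = c ∧ W (i+2) = d)]

theorem stmt_8 (n : ℕ) [NeZero n] (hn : 4 ≤ n) (W : ZMod n → Fin 2) :
    (occ n 4 W ![0,0,1,1] : ℤ) - occ n 4 W ![1,1,0,0]
      = (occ n 4 W ![1,1,0,1] : ℤ) - occ n 4 W ![1,0,1,1] ∧
    (occ n 4 W ![1,1,0,1] : ℤ) - occ n 4 W ![1,0,1,1]
      = (occ n 4 W ![1,0,1,0] : ℤ) - occ n 4 W ![0,1,0,1] ∧
    (occ n 4 W ![1,0,1,0] : ℤ) - occ n 4 W ![0,1,0,1]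
      = (occ n 4 W ![0,1,0,0] : ℤ) - occ n 4 W ![0,0,1,0] := by
  have h000 := key n W 0 0 0
  have h001 := key n W 0 0 1
  have h010 := key n W 0 1 0
  have h011 := key n W 0 1 1
  have h100 := key n W 1 0 0
  have h101 := key n W 1 0 1
  have h110 := key n W 1 1 0
  have h111 := key n W 1 1 1
  refine ⟨?_, ?_, ?_⟩ <;> omega
end

section
/- For any circular binary word W of length n ≥ 4, the integer 4·(|W|_{0011} − |W|_{1100}) equals (|W|_{0011} + |W|_{1101} + |W|_{1010} + |W|_{0100}) − (|W|_{1100} + |W|_{1011} + |W|_{0101} + |W|_{0010}); i.e., the signed number of traversals of the 4-cycle 001→110→101→010→001 in the shortened graph is 4 times the common Grandsart difference. -/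
open Finset

lemma card_filter_eq_zero_add_card_filter_eq_one {α : Type*} [Fintype α] (f : α → Fin 2)
    (p : α → Prop) [DecidablePred p] :
    #{a | f a = 0 ∧ p a} + #{a | f a = 1 ∧ p a} = #{a | p a} := by
  have h_one_iff : ∀ x : Fin 2, x = 1 ↔ x ≠ 0 := by decide
  rw [← card_filter_add_card_filter_not (s := {a | p a}) (fun a => f a = 0),
    filter_filter, filter_filter]
  simp only [h_one_iff, and_comm (a := p _)]

section Occurrences

variable {n k : ℕ} [NeZero n] (W : ZMod n → Fin 2) (U : Fin k → Fin 2)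

lemma occ_cons (x : Fin 2) :
    occ n (k + 1) W (Fin.cons x U) =
      #{i | W i = x ∧ ∀ j : Fin k, W (i + 1 + j) = U j} := by
  unfold occ
  congr 1
  ext i
  simp only [mem_filter, mem_univ, true_and, Fin.forall_fin_succ, Fin.cons_zero, Fin.cons_succ,
    Fin.val_zero, Nat.cast_zero, add_zero, Fin.val_succ, Nat.cast_succ, ← add_assoc,
    add_right_comm i (1 : ZMod n)]

lemma occ_snoc (y : Fin 2) :
    occ n (k + 1) W (Fin.snoc U y) =
      #{i | (∀ j : Fin k, W (i + j) = U j) ∧ W (i + k) = y} := by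
  unfold occ
  congr 1
  ext i
  simp only [mem_filter, mem_univ, true_and, Fin.forall_fin_succ', Fin.snoc_castSucc, Fin.snoc_last,
    Fin.val_castSucc, Fin.val_last]

theorem occ_cons_zero_add_occ_cons_one :
    occ n (k + 1) W (Fin.cons 0 U) + occ n (k + 1) W (Fin.cons 1 U) = occ n k W U := by
  rw [occ_cons, occ_cons, card_filter_eq_zero_add_card_filter_eq_one, occ]
  exact card_equiv (Equiv.addRight 1) (by simp)

theorem occ_snoc_zero_add_occ_snoc_one :
    occ n (k + 1) W (Fin.snoc U 0) + occ n (k + 1) W (Fin.snoc U 1) = occ n k W U := by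
  rw [occ_snoc, occ_snoc, occ]
  simp only [and_comm (b := W _ = _)]
  exact card_filter_eq_zero_add_card_filter_eq_one (fun i => W (i + k)) _

end Occurrences

theorem occ_inflow_eq_outflow {n : ℕ} [NeZero n] (W : ZMod n → Fin 2) (a b c : Fin 2) :
    occ n 4 W ![0, a, b, c] + occ n 4 W ![1, a, b, c]
      = occ n 4 W ![a, b, c, 0] + occ n 4 W ![a, b, c, 1] := by
  have hsnoc : ∀ y : Fin 2, ![a, b, c, y] = Fin.snoc ![a, b, c] y := fun y => by
    ext j; fin_cases j <;> rfl
  rw [hsnoc, hsnoc]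
  exact (occ_cons_zero_add_occ_cons_one W _).trans (occ_snoc_zero_add_occ_snoc_one W _).symm

theorem stmt_19_general (n : ℕ) [NeZero n] (W : ZMod n → Fin 2) :
    4 * ((occ n 4 W ![0,0,1,1] : ℤ) - occ n 4 W ![1,1,0,0])
      = ((occ n 4 W ![0,0,1,1] : ℤ) + occ n 4 W ![1,1,0,1]
          + occ n 4 W ![1,0,1,0] + occ n 4 W ![0,1,0,0])
        - ((occ n 4 W ![1,1,0,0] : ℤ) + occ n 4 W ![1,0,1,1]
          + occ n 4 W ![0,1,0,1] + occ n 4 W ![0,0,1,0]) := by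
  have h011 := occ_inflow_eq_outflow W 0 1 1
  have h110 := occ_inflow_eq_outflow W 1 1 0
  have h101 := occ_inflow_eq_outflow W 1 0 1
  have h010 := occ_inflow_eq_outflow W 0 1 0
  have h111 := occ_inflow_eq_outflow W 1 1 1
  omega

theorem stmt_19 (n : ℕ) [NeZero n] (hn : 4 ≤ n) (W : ZMod n → Fin 2) :
    4 * ((occ n 4 W ![0,0,1,1] : ℤ) - occ n 4 W ![1,1,0,0])
      = ((occ n 4 W ![0,0,1,1] : ℤ) + occ n 4 W ![1,1,0,1]
          + occ n 4 W ![1,0,1,0] + occ n 4 W ![0,1,0,0])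
        - ((occ n 4 W ![1,1,0,0] : ℤ) + occ n 4 W ![1,0,1,1]
          + occ n 4 W ![0,1,0,1] + occ n 4 W ![0,0,1,0]) :=
  stmt_19_general n W
end
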